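/- Let u, f : ℝ^d → ℝ^d be C¹ and compactly supported with div u(x) = 0 for all x, and let A1, A2, A3, A4, A5 ∈ ℝ satisfy A1 − A3 = 0 and A5 − A4 = 0. Then for every constant vector e ∈ ℝ^d: ∫ ⟨f_m(x), e⟩ dx = 0; that is, the mass-diffusion correction f_m produces no net momentum. -/

import Mathlib

/-!
For `A3 = A1`, `A5 = A4` and `div u = 0` the momentum density is itself a divergence: by the
product rule `div (φ • v) = Dφ[v] + φ div v`,
`⟪f_m, e⟫ = div (A1 ⟪u, f⟫ e + A2 ⟪f, e⟫ u + A4 ⟪u, e⟫ f)`,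
a `C¹` field supported in the support of `u`. The divergence `tr (Dv)` of a compactly supported
`C¹` field integrates to zero, since already `∫ Dv = 0` by integration by parts against `1`.
-/

open MeasureTheory RealInnerProductSpace

/-- `div v x = tr (Dv(x))`. -/
noncomputable def vdiv {d : ℕ}
    (v : EuclideanSpace ℝ (Fin d) → EuclideanSpace ℝ (Fin d))
    (x : EuclideanSpace ℝ (Fin d)) : ℝ :=
  LinearMap.trace ℝ _ (fderiv ℝ v x).toLinearMap

/-- The viscous momentum flux
`f_m = A1 (Df)*[u] + A2 Df[u] + A3 (Du)*[f] + A4 Du[f] + A5 (div f) u`. -/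
noncomputable def viscFlux {d : ℕ} (A1 A2 A3 A4 A5 : ℝ)
    (u f : EuclideanSpace ℝ (Fin d) → EuclideanSpace ℝ (Fin d))
    (x : EuclideanSpace ℝ (Fin d)) : EuclideanSpace ℝ (Fin d) :=
  A1 • (ContinuousLinearMap.adjoint (fderiv ℝ f x)) (u x)
    + A2 • (fderiv ℝ f x) (u x)
    + A3 • (ContinuousLinearMap.adjoint (fderiv ℝ u x)) (f x)
    + A4 • (fderiv ℝ u x) (f x)
    + A5 • (vdiv f x • u x)

section

variable {E F : Type*} [NormedAddCommGroup E] [NormedSpace ℝ E]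
  [NormedAddCommGroup F] [NormedSpace ℝ F]

theorem trace_fderiv_add {v w : E → E} {x : E} (hv : DifferentiableAt ℝ v x)
    (hw : DifferentiableAt ℝ w x) :
    LinearMap.trace ℝ E (fderiv ℝ (fun y => v y + w y) x).toLinearMap
      = LinearMap.trace ℝ E (fderiv ℝ v x).toLinearMap
        + LinearMap.trace ℝ E (fderiv ℝ w x).toLinearMap := by
  rw [fderiv_fun_add hv hw, ContinuousLinearMap.toLinearMap_add, map_add]

theorem trace_fderiv_smul [FiniteDimensional ℝ E] {φ : E → ℝ} {v : E → E} {x : E}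
    (hφ : DifferentiableAt ℝ φ x) (hv : DifferentiableAt ℝ v x) :
    LinearMap.trace ℝ E (fderiv ℝ (fun y => φ y • v y) x).toLinearMap
      = fderiv ℝ φ x (v x) + φ x * LinearMap.trace ℝ E (fderiv ℝ v x).toLinearMap := by
  rw [fderiv_fun_smul hφ hv, ContinuousLinearMap.toLinearMap_add, map_add,
    ContinuousLinearMap.toLinearMap_smul, map_smul, ContinuousLinearMap.coe_smulRight,
    LinearMap.trace_smulRight, smul_eq_mul, add_comm]
  rfl

variable [MeasurableSpace E] [BorelSpace E] [FiniteDimensional ℝ E]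
  (μ : Measure E) [μ.IsAddHaarMeasure]

theorem integral_fderiv_eq_zero [CompleteSpace F] {g : E → F} (hg : ContDiff ℝ 1 g)
    (hcg : HasCompactSupport g) : ∫ x, fderiv ℝ g x ∂μ = 0 := by
  have hg' : Continuous (fderiv ℝ g) := hg.continuous_fderiv one_ne_zero
  ext v
  rw [ContinuousLinearMap.integral_apply (hg'.integrable_of_hasCompactSupport (hcg.fderiv ℝ))]
  simpa using integral_smul_fderiv_eq_neg_fderiv_smul_of_integrable (μ := μ)
    (f := fun _ => (1 : ℝ)) (v := v) (by simp)
    (by simpa using ((hg'.clm_apply continuous_const).integrable_of_hasCompactSupport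
      (hcg.fderiv_apply ℝ v)))
    (by simpa using hg.continuous.integrable_of_hasCompactSupport hcg)
    (fun x _ => differentiableAt_const _) (fun x _ => hg.differentiable one_ne_zero x)

theorem integral_trace_fderiv_eq_zero {v : E → E} (hv : ContDiff ℝ 1 v)
    (hcv : HasCompactSupport v) :
    ∫ x, LinearMap.trace ℝ E (fderiv ℝ v x).toLinearMap ∂μ = 0 := by
  let T : (E →L[ℝ] E) →L[ℝ] ℝ :=
    ((LinearMap.trace ℝ E).comp (ContinuousLinearMap.coeLM ℝ)).toContinuousLinearMap
  have hint : Integrable (fderiv ℝ v) μ :=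
    (hv.continuous_fderiv one_ne_zero).integrable_of_hasCompactSupport (hcv.fderiv ℝ)
  calc ∫ x, LinearMap.trace ℝ E (fderiv ℝ v x).toLinearMap ∂μ
      = T (∫ x, fderiv ℝ v x ∂μ) := T.integral_comp_comm hint
    _ = 0 := by rw [integral_fderiv_eq_zero μ hv hcv, map_zero]

end

noncomputable def viscFluxPotential {d : ℕ} (A1 A2 A4 : ℝ)
    (u f : EuclideanSpace ℝ (Fin d) → EuclideanSpace ℝ (Fin d))
    (e y : EuclideanSpace ℝ (Fin d)) : EuclideanSpace ℝ (Fin d) :=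
  (A1 * ⟪u y, f y⟫) • e + (A2 * ⟪f y, e⟫) • u y + (A4 * ⟪u y, e⟫) • f y

section

variable {d : ℕ} {u f : EuclideanSpace ℝ (Fin d) → EuclideanSpace ℝ (Fin d)}

theorem inner_viscFlux_eq_vdiv_viscFluxPotential {x : EuclideanSpace ℝ (Fin d)}
    (hu : DifferentiableAt ℝ u x) (hf : DifferentiableAt ℝ f x) (hdiv : vdiv u x = 0)
    (A1 A2 A4 : ℝ) (e : EuclideanSpace ℝ (Fin d)) :
    ⟪viscFlux A1 A2 A1 A4 A4 u f x, e⟫ = vdiv (viscFluxPotential A1 A2 A4 u f e) x := by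
  have huf : DifferentiableAt ℝ (fun y => ⟪u y, f y⟫) x := hu.inner ℝ hf
  have hfe : DifferentiableAt ℝ (fun y => ⟪f y, e⟫) x := hf.inner ℝ (differentiableAt_const e)
  have hue : DifferentiableAt ℝ (fun y => ⟪u y, e⟫) x := hu.inner ℝ (differentiableAt_const e)
  unfold vdiv at hdiv ⊢
  unfold viscFluxPotential
  rw [trace_fderiv_add (by fun_prop) (by fun_prop), trace_fderiv_add (by fun_prop) (by fun_prop),
    trace_fderiv_smul (by fun_prop) (by fun_prop), trace_fderiv_smul (by fun_prop) hu,
    trace_fderiv_smul (by fun_prop) hf, fderiv_const_mul huf, fderiv_const_mul hfe,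
    fderiv_const_mul hue, fderiv_fun_const, hdiv]
  simp only [viscFlux, vdiv, inner_add_left, real_inner_smul_left,
    ContinuousLinearMap.adjoint_inner_left, smul_apply, smul_eq_mul,
    fderiv_inner_apply ℝ hu hf, fderiv_inner_apply ℝ hf (differentiableAt_const e),
    fderiv_inner_apply ℝ hu (differentiableAt_const e), fderiv_fun_const, Pi.zero_apply,
    ContinuousLinearMap.toLinearMap_zero, map_zero, zero_apply,
    inner_zero_right, mul_zero, add_zero, zero_add]
  rw [real_inner_comm (f x)]
  ring

theorem contDiff_viscFluxPotential (hu : ContDiff ℝ 1 u) (hf : ContDiff ℝ 1 f)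
    (A1 A2 A4 : ℝ) (e : EuclideanSpace ℝ (Fin d)) :
    ContDiff ℝ 1 (viscFluxPotential A1 A2 A4 u f e) :=
  (((contDiff_const.mul (hu.inner ℝ hf)).smul contDiff_const).add
    ((contDiff_const.mul (hf.inner ℝ contDiff_const)).smul hu)).add
    ((contDiff_const.mul (hu.inner ℝ contDiff_const)).smul hf)

theorem hasCompactSupport_viscFluxPotential (hcu : HasCompactSupport u) (A1 A2 A4 : ℝ)
    (e : EuclideanSpace ℝ (Fin d)) :
    HasCompactSupport (viscFluxPotential A1 A2 A4 u f e) :=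
  hcu.mono <| Function.support_subset_iff'.mpr fun y hy => by
    simp [viscFluxPotential, Function.notMem_support.mp hy]

end

theorem viscFlux_momentum_general {d : ℕ}
    (u f : EuclideanSpace ℝ (Fin d) → EuclideanSpace ℝ (Fin d))
    (hu : ContDiff ℝ 1 u) (hf : ContDiff ℝ 1 f)
    (hcu : HasCompactSupport u)
    (hdiv : ∀ x, vdiv u x = 0)
    (A1 A2 A3 A4 A5 : ℝ)
    (h1 : A1 - A3 = 0) (h2 : A5 - A4 = 0)
    (e : EuclideanSpace ℝ (Fin d)) :
    ∫ x, ⟪viscFlux A1 A2 A3 A4 A5 u f x, e⟫ = 0 := by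
  rw [show A3 = A1 by linarith, show A5 = A4 by linarith]
  have hdensity : ∀ x, ⟪viscFlux A1 A2 A1 A4 A4 u f x, e⟫
      = vdiv (viscFluxPotential A1 A2 A4 u f e) x := fun x =>
    inner_viscFlux_eq_vdiv_viscFluxPotential (hu.differentiable one_ne_zero x)
      (hf.differentiable one_ne_zero x) (hdiv x) A1 A2 A4 e
  simp only [hdensity]
  exact integral_trace_fderiv_eq_zero volume (contDiff_viscFluxPotential hu hf A1 A2 A4 e)
    (hasCompactSupport_viscFluxPotential hcu A1 A2 A4 e)

/-- Part 2 of Theorem 2: if `A1 − A3 = 0` and `A5 − A4 = 0`, the mass-diffusion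
correction `f_m` produces no net momentum. -/
theorem viscFlux_momentum {d : ℕ}
    (u f : EuclideanSpace ℝ (Fin d) → EuclideanSpace ℝ (Fin d))
    (hu : ContDiff ℝ 1 u) (hf : ContDiff ℝ 1 f)
    (hcu : HasCompactSupport u) (hcf : HasCompactSupport f)
    (hdiv : ∀ x, vdiv u x = 0)
    (A1 A2 A3 A4 A5 : ℝ)
    (h1 : A1 - A3 = 0) (h2 : A5 - A4 = 0)
    (e : EuclideanSpace ℝ (Fin d)) :
    ∫ x, ⟪viscFlux A1 A2 A3 A4 A5 u f x, e⟫ = 0 :=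
  viscFlux_momentum_general u f hu hf hcu hdiv A1 A2 A3 A4 A5 h1 h2 e
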